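/- For every integer m and nonnegative integer k: ∑_{j=0}^{k} (−1)^j·C(k,j)·2^j·T_{m−4k+3j} = (−1)^k·T_m, where T is the Tribonacci sequence extended to all integers. -/

import Mathlib

/-- Tribonacci numbers on the naturals. -/
def tribN : ℕ → ℤ
  | 0 => 0
  | 1 => 1
  | 2 => 1
  | n + 3 => tribN (n + 2) + tribN (n + 1) + tribN n

/-- Tribonacci at negative indices: `tribNeg n = T (-n)`, via `T (-n) = 2·T (3-n) - T (4-n)`. -/
def tribNeg : ℕ → ℤ
  | 0 => tribN 0
  | 1 => 2 * tribN 2 - tribN 3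
  | 2 => 2 * tribN 1 - tribN 2
  | 3 => 2 * tribN 0 - tribN 1
  | 4 => 2 * tribNeg 1 - tribN 0
  | n + 5 => 2 * tribNeg (n + 2) - tribNeg (n + 1)

/-- Tribonacci sequence extended to all integers. -/
def T (m : ℤ) : ℤ := if 0 ≤ m then tribN m.toNat else tribNeg (-m).toNat

/-!
Writing `E` for the shift `f ↦ (m ↦ f (m + 1))`, the backward recurrence says that
`E⁻⁴ - 2 E⁻¹` acts on `T` as `-1`. The left-hand side is the binomial expansion of
`(E⁻⁴ - 2 E⁻¹)ᵏ T` evaluated at `m`, so it equals `(-1)ᵏ T m`.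
-/

open Finset

theorem sum_choose_mul_shift_eq_neg_one_pow {R : Type*} [CommRing R] {f : ℤ → R}
    (hf : ∀ m, f (m - 4) = 2 * f (m - 1) - f m) (m : ℤ) (k : ℕ) :
    ∑ j ∈ range (k + 1), (-1 : R) ^ j * k.choose j * 2 ^ j * f (m - 4 * k + 3 * j) =
      (-1) ^ k * f m := by
  induction k generalizing m with
  | zero => simp
  | succ k ih =>
    let a : ℕ → R := fun i => (-2) ^ i * f (m - 4 * (k + 1 : ℕ) + 3 * i)
    calc _ = ∑ i ∈ range (k + 2), ((k + 1).choose i : R) * a i :=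
          sum_congr rfl fun i _ => by simp only [a, neg_pow (2 : R)]; ring
      _ = ∑ i ∈ range (k + 1), (k.choose i : R) * a i +
            ∑ i ∈ range (k + 1), (k.choose i : R) * a (i + 1) :=
          sum_choose_succ_mul (fun i _ => a i) k
      _ = (-1) ^ k * f (m - 4) + -2 * ((-1) ^ k * f (m - 1)) := by
          rw [← ih, ← ih, mul_sum]
          congr 1 <;> refine sum_congr rfl fun i _ => ?_ <;> simp only [a, neg_pow (2 : R)] <;>
            push_cast <;> ring_nf
      _ = (-1) ^ (k + 1) * f m := by rw [hf]; ring

lemma tribN_eq_two_mul_sub (n : ℕ) : tribN n = 2 * tribN (n + 3) - tribN (n + 4) := by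
  rw [tribN.eq_4 (n + 1), tribN.eq_4 n]; ring

lemma tribNeg_add_four (n : ℕ) : tribNeg (n + 4) = 2 * tribNeg (n + 1) - tribNeg n := by
  rcases n with _ | n
  · rfl
  · rw [tribNeg]

lemma T_natCast (n : ℕ) : T n = tribN n := by simp [T]

lemma T_neg_natCast (n : ℕ) : T (-n) = tribNeg n := by
  rcases n with _ | n
  · rfl
  · rw [T, if_neg (by omega), neg_neg, Int.toNat_natCast]

lemma T_sub_four (m : ℤ) : T (m - 4) = 2 * T (m - 1) - T m := by
  obtain ⟨n, rfl | rfl⟩ := Int.eq_nat_or_neg m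
  · rcases lt_or_ge n 4 with hn | hn
    · interval_cases n <;> rfl
    · obtain ⟨n, rfl⟩ := Nat.exists_eq_add_of_le' hn
      rw [show ((n + 4 : ℕ) : ℤ) - 4 = n by push_cast; ring,
        show ((n + 4 : ℕ) : ℤ) - 1 = ↑(n + 3) by push_cast; ring,
        T_natCast, T_natCast, T_natCast, tribN_eq_two_mul_sub]
  · rw [show -(n : ℤ) - 4 = -↑(n + 4) by push_cast; ring,
      show -(n : ℤ) - 1 = -↑(n + 1) by push_cast; ring,
      T_neg_natCast, T_neg_natCast, T_neg_natCast, tribNeg_add_four]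

theorem stmt16 : ∀ (m : ℤ) (k : ℕ),
    ∑ j ∈ Finset.range (k + 1),
        (-1 : ℤ) ^ j * (k.choose j : ℤ) * 2 ^ j * T (m - 4 * k + 3 * j) =
      (-1 : ℤ) ^ k * T m :=
  sum_choose_mul_shift_eq_neg_one_pow T_sub_four
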